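/- If u is four times continuously differentiable on [x-h, x+2h] with h > 0, then |u'(x) − (1/(6h))·[−2·u(x-h) − 3·u(x) + 6·u(x+h) − u(x+2h)]| ≤ (h³/6)·sup_{s ∈ [x-h, x+2h]} |u⁗(s)|. -/

import Mathlib

/-!
The stencil is exact on cubics, so applied to `u` its error is the stencil applied to the
Taylor remainder `u - T₃` at `x`, which vanishes at `x`. With `M = sup |u⁗|` over the interval,
the Lagrange form of the remainder gives `|(u - T₃)(x + kh)| ≤ M (|k| h)⁴ / 24`; the stencil
weights `2, 6, 1` at `k = -1, 1, 2` give `(2 + 6 + 16) / 24 · M h⁴ = M h⁴`, and dividing by `6h`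
leaves `M h³ / 6`.
-/

open Set Nat

theorem iteratedDerivWithin_subset {f : ℝ → ℝ} {s t : Set ℝ} {n : ℕ} {x : ℝ} (st : s ⊆ t)
    (hs : UniqueDiffOn ℝ s) (ht : UniqueDiffOn ℝ t) (hf : ContDiffOn ℝ n f t) (hx : x ∈ s) :
    iteratedDerivWithin n f s x = iteratedDerivWithin n f t x := by
  simp only [iteratedDerivWithin_eq_iteratedFDerivWithin,
    iteratedFDerivWithin_subset st hs ht hf hx]

theorem taylorWithinEval_subset {f : ℝ → ℝ} {s t : Set ℝ} {n : ℕ} {x₀ : ℝ} (st : s ⊆ t)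
    (hs : UniqueDiffOn ℝ s) (ht : UniqueDiffOn ℝ t) (hf : ContDiffOn ℝ n f t) (hx₀ : x₀ ∈ s) :
    taylorWithinEval f n s x₀ = taylorWithinEval f n t x₀ := by
  ext x
  simp only [taylor_within_apply]
  refine Finset.sum_congr rfl fun k hk => ?_
  have hkn : k ≤ n := Finset.mem_range_succ_iff.1 hk
  rw [iteratedDerivWithin_subset st hs ht (hf.of_le (mod_cast hkn)) hx₀]

/-- Unlike `taylor_mean_remainder_lagrange`, the derivatives are taken within the ambient `s`. -/
theorem taylor_mean_remainder_lagrange_of_subset {f : ℝ → ℝ} {s : Set ℝ} {x₀ x : ℝ} {n : ℕ}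
    (hx : x₀ ≠ x) (hs : UniqueDiffOn ℝ s) (hsub : uIcc x₀ x ⊆ s)
    (hf : ContDiffOn ℝ (n + 1) f s) :
    ∃ ξ ∈ uIoo x₀ x, f x - taylorWithinEval f n s x₀ x =
      iteratedDerivWithin (n + 1) f s ξ * (x - x₀) ^ (n + 1) / (n + 1)! := by
  have hu : UniqueDiffOn ℝ (uIcc x₀ x) := uniqueDiffOn_uIcc hx
  have hfu : ContDiffOn ℝ (n + 1) f (uIcc x₀ x) := hf.mono hsub
  obtain ⟨ξ, hξ, hrem⟩ := taylor_mean_remainder_lagrange hx hfu.of_succ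
    ((hfu.differentiableOn_iteratedDerivWithin (mod_cast n.lt_succ_self) hu).mono
      uIoo_subset_uIcc_self)
  refine ⟨ξ, hξ, ?_⟩
  rwa [taylorWithinEval_subset hsub hu hs hf.of_succ left_mem_uIcc,
    iteratedDerivWithin_subset hsub hu hs (mod_cast hf) (uIoo_subset_uIcc_self hξ)] at hrem

theorem abs_sub_taylorWithinEval_le {f : ℝ → ℝ} {s : Set ℝ} {x₀ x C : ℝ} {n : ℕ}
    (hs : UniqueDiffOn ℝ s) (hsub : uIcc x₀ x ⊆ s) (hf : ContDiffOn ℝ (n + 1) f s)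
    (hC : ∀ y ∈ s, |iteratedDerivWithin (n + 1) f s y| ≤ C) :
    |f x - taylorWithinEval f n s x₀ x| ≤ C * |x - x₀| ^ (n + 1) / (n + 1)! := by
  rcases eq_or_ne x₀ x with rfl | hx
  · simp [taylorWithinEval_self]
  obtain ⟨ξ, hξ, hrem⟩ := taylor_mean_remainder_lagrange_of_subset hx hs hsub hf
  rw [hrem, abs_div, abs_mul, abs_pow, Nat.abs_cast]
  gcongr
  exact hC ξ (hsub (uIoo_subset_uIcc_self hξ))

theorem taylorWithinEval_three (f : ℝ → ℝ) (s : Set ℝ) (x₀ : ℝ) :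
    taylorWithinEval f 3 s x₀ = fun y => f x₀ + derivWithin f s x₀ * (y - x₀)
      + iteratedDerivWithin 2 f s x₀ / 2 * (y - x₀) ^ 2
      + iteratedDerivWithin 3 f s x₀ / 6 * (y - x₀) ^ 3 := by
  ext y
  simp only [taylor_within_apply, Finset.sum_range_succ, Finset.sum_range_zero, smul_eq_mul,
    iteratedDerivWithin_zero, iteratedDerivWithin_one, Nat.factorial]
  push_cast
  ring

theorem IsCompact.le_biSup_of_continuousOn {α : Type*} [TopologicalSpace α] {K : Set α}
    {f : α → ℝ} (hK : IsCompact K) (hf : ContinuousOn f K) {y : α} (hy : y ∈ K) :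
    f y ≤ ⨆ s ∈ K, f s := by
  refine le_ciSup₂ (f := fun s _ => f s) ?_ y hy
  refine (hK.bddAbove_image hf).mono ?_
  simp only [iUnion_subset_iff, range_subset_iff]
  exact fun i hi => mem_image_of_mem f hi

/-- The one-sided gradient formula `P₁`. -/
noncomputable def boundaryStencil (h : ℝ) (g : ℝ → ℝ) (x : ℝ) : ℝ :=
  1 / (6 * h) * (-2 * g (x - h) - 3 * g x + 6 * g (x + h) - g (x + 2 * h))

theorem boundaryStencil_sub (h : ℝ) (f g : ℝ → ℝ) (x : ℝ) :
    boundaryStencil h (f - g) x = boundaryStencil h f x - boundaryStencil h g x := by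
  simp only [boundaryStencil, Pi.sub_apply]
  ring

theorem boundaryStencil_cubic {h : ℝ} (hh : h ≠ 0) (x c₀ c₁ c₂ c₃ : ℝ) :
    boundaryStencil h (fun y => c₀ + c₁ * (y - x) + c₂ * (y - x) ^ 2 + c₃ * (y - x) ^ 3) x =
      c₁ := by
  simp only [boundaryStencil]
  field_simp
  ring

theorem abs_boundaryStencil_le {h M x : ℝ} {r : ℝ → ℝ} (hh : 0 < h) (h₀ : r x = 0)
    (h₁ : |r (x - h)| ≤ M * h ^ 4 / 24) (h₂ : |r (x + h)| ≤ M * h ^ 4 / 24)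
    (h₃ : |r (x + 2 * h)| ≤ M * (2 * h) ^ 4 / 24) :
    |boundaryStencil h r x| ≤ h ^ 3 / 6 * M := by
  rw [boundaryStencil, h₀, mul_zero, sub_zero, abs_mul,
    abs_of_pos (by positivity : 0 < 1 / (6 * h))]
  calc 1 / (6 * h) * |-2 * r (x - h) + 6 * r (x + h) - r (x + 2 * h)|
      ≤ 1 / (6 * h) * (|-2 * r (x - h) + 6 * r (x + h)| + |r (x + 2 * h)|) := by
        gcongr; exact abs_sub _ _
    _ ≤ 1 / (6 * h) * (|-2 * r (x - h)| + |6 * r (x + h)| + |r (x + 2 * h)|) := by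
        gcongr; exact abs_add_le _ _
    _ = (2 * |r (x - h)| + 6 * |r (x + h)| + |r (x + 2 * h)|) / (6 * h) := by
        norm_num [abs_mul]; ring
    _ ≤ M * h ^ 4 / (6 * h) := by gcongr; linarith
    _ = h ^ 3 / 6 * M := by field_simp

/-- The near-boundary collocation-polynomial gradient formula
P₁ = (1/(6h))·[−2u(x−h) − 3u(x) + 6u(x+h) − u(x+2h)]
is third-order accurate for the first derivative. -/
theorem boundary_numerical_gradient_third_order
    (u : ℝ → ℝ) (x h : ℝ) (hh : 0 < h)
    (hu : ContDiffOn ℝ 4 u (Set.Icc (x - h) (x + 2 * h))) :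
    |derivWithin u (Set.Icc (x - h) (x + 2 * h)) x
        - (1 / (6 * h)) * (-2 * u (x - h) - 3 * u x + 6 * u (x + h) - u (x + 2 * h))|
      ≤ (h ^ 3 / 6) * ⨆ s ∈ Set.Icc (x - h) (x + 2 * h),
          |iteratedDerivWithin 4 u (Set.Icc (x - h) (x + 2 * h)) s| := by
  set I := Icc (x - h) (x + 2 * h)
  set M := ⨆ s ∈ I, |iteratedDerivWithin 4 u I s|
  have hI : UniqueDiffOn ℝ I := uniqueDiffOn_Icc (by linarith)
  have hM : ∀ y ∈ I, |iteratedDerivWithin (3 + 1) u I y| ≤ M := fun y hy =>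
    isCompact_Icc.le_biSup_of_continuousOn
      (hu.continuousOn_iteratedDerivWithin le_rfl hI).abs hy
  have hremainder : ∀ y ∈ I, |(u - taylorWithinEval u 3 I x) y| ≤ M * |y - x| ^ 4 / 24 :=
    fun y hy => abs_sub_taylorWithinEval_le hI
      (uIcc_subset_Icc ⟨by linarith, by linarith⟩ hy) hu hM
  have hexact : boundaryStencil h (taylorWithinEval u 3 I x) x = derivWithin u I x := by
    rw [taylorWithinEval_three]
    exact boundaryStencil_cubic hh.ne' _ _ _ _ _
  change |derivWithin u I x - boundaryStencil h u x| ≤ h ^ 3 / 6 * M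
  rw [← hexact, abs_sub_comm, ← boundaryStencil_sub]
  refine abs_boundaryStencil_le hh (by simp [taylorWithinEval_self]) ?_ ?_ ?_
  · simpa [abs_of_pos hh] using hremainder (x - h) ⟨le_rfl, by linarith⟩
  · simpa [abs_of_pos hh] using hremainder (x + h) ⟨by linarith, by linarith⟩
  · simpa [abs_of_pos hh] using hremainder (x + 2 * h) ⟨by linarith, le_rfl⟩
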